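/- In the SVE model, the wave potential vorticity Q_W := Γ J(√(ρ ρ_ref), |a|²) is advected by the flow: if ρ and |a|² are both advected by a divergence-free smooth velocity v̂, then ∂_t Q_W + v̂·∇Q_W = 0. -/

import Mathlib

open Real MeasureTheory

noncomputable def px (f : ℝ × ℝ → ℝ) (p : ℝ × ℝ) : ℝ :=
  deriv (fun x => f (x, p.2)) p.1

noncomputable def py (f : ℝ × ℝ → ℝ) (p : ℝ × ℝ) : ℝ :=
  deriv (fun y => f (p.1, y)) p.2

/-- Jacobian bracket J(f,g) = f_x g_y - f_y g_x. -/
noncomputable def Jb (f g : ℝ × ℝ → ℝ) (p : ℝ × ℝ) : ℝ :=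
  px f p * py g p - py f p * px g p

/-- partial time derivative of a time-dependent field -/
noncomputable def pt (f : ℝ × ℝ → ℝ → ℝ) (p : ℝ × ℝ) (t : ℝ) : ℝ :=
  deriv (fun s => f p s) t

def Smooth2 (f : ℝ × ℝ → ℝ) : Prop := ContDiff ℝ (⊤ : ℕ∞) f
def SmoothT (f : ℝ × ℝ → ℝ → ℝ) : Prop :=
  ContDiff ℝ (⊤ : ℕ∞) (fun q : (ℝ × ℝ) × ℝ => f q.1 q.2)
def SmoothV (v : ℝ × ℝ → ℝ → ℝ × ℝ) : Prop :=
  ContDiff ℝ (⊤ : ℕ∞) (fun q : (ℝ × ℝ) × ℝ => v q.1 q.2)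

/-- material derivative ∂_t f + v·∇f -/
noncomputable def MatD (v : ℝ × ℝ → ℝ → ℝ × ℝ) (f : ℝ × ℝ → ℝ → ℝ)
    (p : ℝ × ℝ) (t : ℝ) : ℝ :=
  pt f p t + (v p t).1 * px (fun q => f q t) p + (v p t).2 * py (fun q => f q t) p

/-- advection: ∂_t f + v·∇f = 0 -/
def Advected (v : ℝ × ℝ → ℝ → ℝ × ℝ) (f : ℝ × ℝ → ℝ → ℝ) : Prop :=
  ∀ p t, MatD v f p t = 0

/-- divergence of a time-dependent vector field -/
noncomputable def divV (v : ℝ × ℝ → ℝ → ℝ × ℝ) (p : ℝ × ℝ) (t : ℝ) : ℝ :=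
  px (fun q => (v q t).1) p + py (fun q => (v q t).2) p

/- ### Auxiliary framework -/

abbrev E3 := (ℝ × ℝ) × ℝ
noncomputable def Dd (F : E3 → ℝ) (u : E3) (z : E3) : ℝ := fderiv ℝ F z u
def ee1 : E3 := ((1,0),0)
def ee2 : E3 := ((0,1),0)
def eet : E3 := ((0,0),1)

lemma slice_x (F : E3 → ℝ) {x y t : ℝ} (hF : DifferentiableAt ℝ F ((x,y),t)) :
    deriv (fun x' => F ((x', y), t)) x = Dd F ee1 ((x,y),t) := by
  have h : HasDerivAt (fun x' : ℝ => (((x' : ℝ), y), t)) ee1 x :=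
    ((hasDerivAt_id x).prodMk (hasDerivAt_const x y)).prodMk (hasDerivAt_const x t)
  exact (hF.hasFDerivAt.comp_hasDerivAt x h).deriv

lemma slice_y (F : E3 → ℝ) {x y t : ℝ} (hF : DifferentiableAt ℝ F ((x,y),t)) :
    deriv (fun y' => F ((x, y'), t)) y = Dd F ee2 ((x,y),t) := by
  have h : HasDerivAt (fun y' : ℝ => ((x, y'), t)) ee2 y :=
    ((hasDerivAt_const y x).prodMk (hasDerivAt_id y)).prodMk (hasDerivAt_const y t)
  exact (hF.hasFDerivAt.comp_hasDerivAt y h).deriv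

lemma slice_t (F : E3 → ℝ) {x y t : ℝ} (hF : DifferentiableAt ℝ F ((x,y),t)) :
    deriv (fun s => F ((x, y), s)) t = Dd F eet ((x,y),t) := by
  have h : HasDerivAt (fun s : ℝ => ((x, y), s)) eet t :=
    ((hasDerivAt_const t x).prodMk (hasDerivAt_const t y)).prodMk (hasDerivAt_id t)
  exact (hF.hasFDerivAt.comp_hasDerivAt t h).deriv

lemma Dd_contDiff {F : E3 → ℝ} (hF : ContDiff ℝ (⊤ : ℕ∞) F) (u : E3) : ContDiff ℝ (⊤ : ℕ∞) (Dd F u) :=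
  (hF.fderiv_right (by simp)).clm_apply contDiff_const

lemma Dd_Dd {F : E3 → ℝ} (hF : ContDiff ℝ (⊤ : ℕ∞) F) (u w z : E3) :
    Dd (Dd F u) w z = fderiv ℝ (fderiv ℝ F) z w u := by
  unfold Dd
  rw [fderiv_clm_apply (((hF.fderiv_right (m := 1) (by exact WithTop.coe_le_coe.mpr le_top)).differentiable (by simp)) z)
    (differentiableAt_const u)]
  simp

lemma Dd_symm {F : E3 → ℝ} (hF : ContDiff ℝ (⊤ : ℕ∞) F) (z u w : E3) :
    fderiv ℝ (fderiv ℝ F) z u w = fderiv ℝ (fderiv ℝ F) z w u :=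
  second_derivative_symmetric (fun y => ((hF.differentiable (by simp)) y).hasFDerivAt)
    (((hF.fderiv_right (m := 1) (by exact WithTop.coe_le_coe.mpr le_top)).differentiable (by simp) z).hasFDerivAt) u w

lemma Dd_mul {A B : E3 → ℝ} {z : E3} (hA : DifferentiableAt ℝ A z)
    (hB : DifferentiableAt ℝ B z) (u : E3) :
    Dd (fun z => A z * B z) u z = Dd A u z * B z + A z * Dd B u z := by
  unfold Dd
  rw [fderiv_fun_mul hA hB]
  simp only [ContinuousLinearMap.add_apply, ContinuousLinearMap.smul_apply, smul_eq_mul]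
  ring

lemma Dd_add {A B : E3 → ℝ} {z : E3} (hA : DifferentiableAt ℝ A z)
    (hB : DifferentiableAt ℝ B z) (u : E3) :
    Dd (fun z => A z + B z) u z = Dd A u z + Dd B u z := by
  unfold Dd; rw [fderiv_fun_add hA hB]; simp

lemma Dd_sub {A B : E3 → ℝ} {z : E3} (hA : DifferentiableAt ℝ A z)
    (hB : DifferentiableAt ℝ B z) (u : E3) :
    Dd (fun z => A z - B z) u z = Dd A u z - Dd B u z := by
  unfold Dd; rw [fderiv_fun_sub hA hB]; simp

lemma Dd_cmul (c : ℝ) {A : E3 → ℝ} {z : E3} (hA : DifferentiableAt ℝ A z) (u : E3) :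
    Dd (fun z => c * A z) u z = c * Dd A u z := by
  unfold Dd; rw [fderiv_const_mul hA]; simp

lemma key (F G U W : E3 → ℝ)
    (hF : ContDiff ℝ (⊤ : ℕ∞) F) (hG : ContDiff ℝ (⊤ : ℕ∞) G)
    (hU : ContDiff ℝ (⊤ : ℕ∞) U) (hW : ContDiff ℝ (⊤ : ℕ∞) W)
    (hdiv : ∀ z, Dd U ee1 z + Dd W ee2 z = 0)
    (hFadv : ∀ z, Dd F eet z + U z * Dd F ee1 z + W z * Dd F ee2 z = 0)
    (hGadv : ∀ z, Dd G eet z + U z * Dd G ee1 z + W z * Dd G ee2 z = 0)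
    (z : E3) :
    Dd (fun z => Dd F ee1 z * Dd G ee2 z - Dd F ee2 z * Dd G ee1 z) eet z
      + U z * Dd (fun z => Dd F ee1 z * Dd G ee2 z - Dd F ee2 z * Dd G ee1 z) ee1 z
      + W z * Dd (fun z => Dd F ee1 z * Dd G ee2 z - Dd F ee2 z * Dd G ee1 z) ee2 z = 0 := by
  have dF : ∀ u z, DifferentiableAt ℝ (Dd F u) z := fun u z => (Dd_contDiff hF u).differentiable (by simp) z
  have dG : ∀ u z, DifferentiableAt ℝ (Dd G u) z := fun u z => (Dd_contDiff hG u).differentiable (by simp) z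
  have dU : DifferentiableAt ℝ U z := hU.differentiable (by simp) z
  have dW : DifferentiableAt ℝ W z := hW.differentiable (by simp) z
  have expJ : ∀ a, Dd (fun z => Dd F ee1 z * Dd G ee2 z - Dd F ee2 z * Dd G ee1 z) a z
      = (Dd (Dd F ee1) a z * Dd G ee2 z + Dd F ee1 z * Dd (Dd G ee2) a z)
        - (Dd (Dd F ee2) a z * Dd G ee1 z + Dd F ee2 z * Dd (Dd G ee1) a z) := by
    intro a
    rw [Dd_sub ((dF ee1 z).fun_mul (dG ee2 z)) ((dF ee2 z).fun_mul (dG ee1 z)),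
      Dd_mul (dF ee1 z) (dG ee2 z), Dd_mul (dF ee2 z) (dG ee1 z)]
  have diffAdv : ∀ (H : E3 → ℝ), ContDiff ℝ (⊤ : ℕ∞) H →
      (∀ z, Dd H eet z + U z * Dd H ee1 z + W z * Dd H ee2 z = 0) →
      ∀ a, Dd (Dd H eet) a z + (Dd U a z * Dd H ee1 z + U z * Dd (Dd H ee1) a z)
        + (Dd W a z * Dd H ee2 z + W z * Dd (Dd H ee2) a z) = 0 := by
    intro H hH hadv a
    have dH : ∀ u z, DifferentiableAt ℝ (Dd H u) z := fun u z => (Dd_contDiff hH u).differentiable (by simp) z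
    have h0 : (fun z => Dd H eet z + (U z * Dd H ee1 z + W z * Dd H ee2 z)) = fun _ => (0:ℝ) := by
      funext z; linarith [hadv z]
    have : Dd (fun z => Dd H eet z + (U z * Dd H ee1 z + W z * Dd H ee2 z)) a z = 0 := by
      rw [h0]; unfold Dd; simp
    rw [Dd_add (dH eet z) ((dU.fun_mul (dH ee1 z)).fun_add (dW.fun_mul (dH ee2 z))),
      Dd_add (dU.fun_mul (dH ee1 z)) (dW.fun_mul (dH ee2 z)),
      Dd_mul dU (dH ee1 z), Dd_mul dW (dH ee2 z)] at this
    linarith [this]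
  have eF1 := diffAdv F hF hFadv ee1
  have eF2 := diffAdv F hF hFadv ee2
  have eG1 := diffAdv G hG hGadv ee1
  have eG2 := diffAdv G hG hGadv ee2
  rw [expJ eet, expJ ee1, expJ ee2]
  simp only [Dd_Dd hF, Dd_Dd hG] at *
  rw [Dd_symm hF z ee1 eet, Dd_symm hF z ee2 eet, Dd_symm hG z ee1 eet, Dd_symm hG z ee2 eet,
    Dd_symm hF z ee2 ee1, Dd_symm hG z ee2 ee1] at *
  have hd := hdiv z
  linear_combination (Dd G ee2 z) * eF1 - (Dd G ee1 z) * eF2 - (Dd F ee2 z) * eG1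
    + (Dd F ee1 z) * eG2 + (Dd F ee2 z * Dd G ee1 z - Dd F ee1 z * Dd G ee2 z) * hd

lemma matD_eq (f : ℝ × ℝ → ℝ → ℝ) (hf : ContDiff ℝ (⊤ : ℕ∞) (fun q : E3 => f q.1 q.2))
    (v : ℝ × ℝ → ℝ → ℝ × ℝ) (p : ℝ × ℝ) (t : ℝ) :
    MatD v f p t = Dd (fun q : E3 => f q.1 q.2) eet (p,t)
      + (v p t).1 * Dd (fun q : E3 => f q.1 q.2) ee1 (p,t)
      + (v p t).2 * Dd (fun q : E3 => f q.1 q.2) ee2 (p,t) := by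
  obtain ⟨x,y⟩ := p
  have hd := hf.differentiable (by simp)
  unfold MatD pt px py
  rw [show (deriv (fun s => f (x,y) s) t) = Dd (fun q : E3 => f q.1 q.2) eet ((x,y),t) from
      slice_t _ (hd _),
    show (deriv (fun x' => (fun q => f q t) (x', ((x:ℝ),y).2)) ((x:ℝ),y).1)
      = Dd (fun q : E3 => f q.1 q.2) ee1 ((x,y),t) from slice_x _ (hd _),
    show (deriv (fun y' => (fun q => f q t) (((x:ℝ),y).1, y')) ((x:ℝ),y).2)
      = Dd (fun q : E3 => f q.1 q.2) ee2 ((x,y),t) from slice_y _ (hd _)]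

lemma divV_eq (v : ℝ × ℝ → ℝ → ℝ × ℝ) (hv : SmoothV v) (p : ℝ × ℝ) (t : ℝ) :
    divV v p t = Dd (fun q : E3 => (v q.1 q.2).1) ee1 (p,t)
      + Dd (fun q : E3 => (v q.1 q.2).2) ee2 (p,t) := by
  obtain ⟨x,y⟩ := p
  have hU : Differentiable ℝ (fun q : E3 => (v q.1 q.2).1) :=
    (contDiff_fst.comp hv).differentiable (by simp)
  have hW : Differentiable ℝ (fun q : E3 => (v q.1 q.2).2) :=
    (contDiff_snd.comp hv).differentiable (by simp)
  unfold divV px py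
  rw [show (deriv (fun x' => (fun q => (v q t).1) (x', ((x:ℝ),y).2)) ((x:ℝ),y).1)
      = Dd (fun q : E3 => (v q.1 q.2).1) ee1 ((x,y),t) from slice_x _ (hU _),
    show (deriv (fun y' => (fun q => (v q t).2) (((x:ℝ),y).1, y')) ((x:ℝ),y).2)
      = Dd (fun q : E3 => (v q.1 q.2).2) ee2 ((x,y),t) from slice_y _ (hW _)]

lemma Jb_eq (F G : E3 → ℝ) (hF : Differentiable ℝ F) (hG : Differentiable ℝ G)
    (p : ℝ × ℝ) (t : ℝ) :
    Jb (fun q => F (q,t)) (fun q => G (q,t)) p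
      = Dd F ee1 (p,t) * Dd G ee2 (p,t) - Dd F ee2 (p,t) * Dd G ee1 (p,t) := by
  obtain ⟨x,y⟩ := p
  unfold Jb px py
  rw [show (deriv (fun x' => (fun q => F (q,t)) (x', ((x:ℝ),y).2)) ((x:ℝ),y).1)
      = Dd F ee1 ((x,y),t) from slice_x _ (hF _),
    show (deriv (fun y' => (fun q => F (q,t)) (((x:ℝ),y).1, y')) ((x:ℝ),y).2)
      = Dd F ee2 ((x,y),t) from slice_y _ (hF _),
    show (deriv (fun x' => (fun q => G (q,t)) (x', ((x:ℝ),y).2)) ((x:ℝ),y).1)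
      = Dd G ee1 ((x,y),t) from slice_x _ (hG _),
    show (deriv (fun y' => (fun q => G (q,t)) (((x:ℝ),y).1, y')) ((x:ℝ),y).2)
      = Dd G ee2 ((x,y),t) from slice_y _ (hG _)]

theorem sve_wave_pv_advected
    (v : ℝ × ℝ → ℝ → ℝ × ℝ) (ρ a2 : ℝ × ℝ → ℝ → ℝ) (Γ ρref : ℝ)
    (hΓ : 0 < Γ) (hρref : 0 < ρref)
    (hv : SmoothV v) (hρ : SmoothT ρ) (ha2 : SmoothT a2)
    (hρpos : ∀ p t, 0 < ρ p t)
    (hdiv : ∀ p t, divV v p t = 0)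
    (hadvρ : Advected v ρ) (hadva2 : Advected v a2) :
    Advected v (fun p t =>
      Γ * Jb (fun q => Real.sqrt (ρ q t * ρref)) (fun q => a2 q t) p) := by
  intro p t
  have hρref' : (ρref : ℝ) ≠ 0 := ne_of_gt hρref
  set R : E3 → ℝ := fun z => ρ z.1 z.2 with hRdef
  set G : E3 → ℝ := fun z => a2 z.1 z.2 with hGdef
  set U : E3 → ℝ := fun z => (v z.1 z.2).1 with hUdef
  set W : E3 → ℝ := fun z => (v z.1 z.2).2 with hWdef
  set F : E3 → ℝ := fun z => Real.sqrt (ρ z.1 z.2 * ρref) with hFdef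
  have hRs : ContDiff ℝ (⊤ : ℕ∞) R := hρ
  have hGs : ContDiff ℝ (⊤ : ℕ∞) G := ha2
  have hUs : ContDiff ℝ (⊤ : ℕ∞) U := contDiff_fst.comp hv
  have hWs : ContDiff ℝ (⊤ : ℕ∞) W := contDiff_snd.comp hv
  have hFs : ContDiff ℝ (⊤ : ℕ∞) F := by
    rw [contDiff_iff_contDiffAt]
    intro z
    exact (Real.contDiffAt_sqrt (ne_of_gt (mul_pos (hρpos z.1 z.2) hρref))).comp z
      (hρ.contDiffAt.mul contDiffAt_const)
  -- advection of ρ and a2 in Dd form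
  have hRadv : ∀ z : E3, Dd R eet z + U z * Dd R ee1 z + W z * Dd R ee2 z = 0 := by
    intro z
    have h := hadvρ z.1 z.2
    rw [matD_eq ρ hρ v z.1 z.2] at h
    simpa using h
  have hGadv : ∀ z : E3, Dd G eet z + U z * Dd G ee1 z + W z * Dd G ee2 z = 0 := by
    intro z
    have h := hadva2 z.1 z.2
    rw [matD_eq a2 ha2 v z.1 z.2] at h
    simpa using h
  have hdivDd : ∀ z : E3, Dd U ee1 z + Dd W ee2 z = 0 := by
    intro z
    have h := hdiv z.1 z.2
    rw [divV_eq v hv z.1 z.2] at h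
    simpa using h
  -- chain rule for sqrt
  have hFd : ∀ (u z : E3),
      Dd F u z = (1 / (2 * Real.sqrt (ρ z.1 z.2 * ρref)) * ρref) * Dd R u z := by
    intro u z
    have h1 : HasFDerivAt (fun z : E3 => ρ z.1 z.2 * ρref) (ρref • fderiv ℝ R z) z :=
      ((hρ.differentiable (by simp) z).hasFDerivAt).mul_const ρref
    have h2 := (Real.hasDerivAt_sqrt
      (ne_of_gt (mul_pos (hρpos z.1 z.2) hρref))).comp_hasFDerivAt z h1
    have h2' : HasFDerivAt F
        ((1 / (2 * Real.sqrt (ρ z.1 z.2 * ρref))) • (ρref • fderiv ℝ R z)) z := h2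
    have h3 : Dd F u z = (1 / (2 * Real.sqrt (ρ z.1 z.2 * ρref))) • (ρref • fderiv ℝ R z) u := by
      unfold Dd
      rw [h2'.fderiv]
      simp
    rw [h3]
    simp only [ContinuousLinearMap.smul_apply, smul_eq_mul]
    unfold Dd
    ring
  have hFadv : ∀ z : E3, Dd F eet z + U z * Dd F ee1 z + W z * Dd F ee2 z = 0 := by
    intro z
    rw [hFd eet z, hFd ee1 z, hFd ee2 z]
    linear_combination (1 / (2 * Real.sqrt (ρ z.1 z.2 * ρref)) * ρref) * hRadv z
  -- the Jacobian field
  set Jq : E3 → ℝ := fun z => Dd F ee1 z * Dd G ee2 z - Dd F ee2 z * Dd G ee1 z with hJdef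
  have hJs : ContDiff ℝ (⊤ : ℕ∞) Jq :=
    ((Dd_contDiff hFs ee1).mul (Dd_contDiff hGs ee2)).sub
      ((Dd_contDiff hFs ee2).mul (Dd_contDiff hGs ee1))
  have hK := key F G U W hFs hGs hUs hWs hdivDd hFadv hGadv (p,t)
  -- identify the goal function with Γ * Jq
  have hfun : (fun q : E3 =>
      (fun p t => Γ * Jb (fun q' => Real.sqrt (ρ q' t * ρref)) (fun q' => a2 q' t) p) q.1 q.2)
      = fun z => Γ * Jq z := by
    funext z
    have := Jb_eq F G (hFs.differentiable (by simp)) (hGs.differentiable (by simp)) z.1 z.2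
    simp only [Prod.mk.eta] at this
    simpa [hJdef] using congrArg (fun r => Γ * r) this
  have hQT : ContDiff ℝ (⊤ : ℕ∞) (fun q : E3 =>
      (fun p t => Γ * Jb (fun q' => Real.sqrt (ρ q' t * ρref)) (fun q' => a2 q' t) p) q.1 q.2) := by
    rw [hfun]; exact contDiff_const.mul hJs
  have hM := matD_eq
    (fun p t => Γ * Jb (fun q' => Real.sqrt (ρ q' t * ρref)) (fun q' => a2 q' t) p) hQT v p t
  rw [hfun] at hM
  rw [Dd_cmul Γ (hJs.differentiable (by simp) _) eet, Dd_cmul Γ (hJs.differentiable (by simp) _) ee1,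
    Dd_cmul Γ (hJs.differentiable (by simp) _) ee2] at hM
  rw [hM]
  linear_combination Γ * hK
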